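/- Let A be a conic acceptance set in an ordered topological vector space X and S a traded asset. Then ρ_{A,S}(X) < ∞ for all X if and only if S_T ∈ Core(A), and ρ_{A,S}(X) > −∞ for all X if and only if −S_T ∈ Core(Aᶜ). -/

import Mathlib

/-!
Scaling by the cone property turns `x + m • S_T ∈ A` into `S_T + m⁻¹ • x ∈ A` for `m > 0` and
into `-S_T + (-m)⁻¹ • x ∈ A` for `m < 0`. Since the acceptable levels `m` form an up-set, `ρ` is
finite from above (below) everywhere exactly when every direction points from `S_T` into `A`
(from `-S_T` into `Aᶜ`). A monotone cone is star-shaped around every positive element, its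
complement around every negative element outside it, and such a point of a star-shaped set lies in
its algebraic core as soon as every direction points into the set.
-/

open Filter Topology

variable {X : Type*} [AddCommGroup X] [Module ℝ X] [PartialOrder X]
  [CovariantClass X X (· + ·) (· ≤ ·)] [PosSMulMono ℝ X]
  [TopologicalSpace X] [IsTopologicalAddGroup X] [ContinuousSMul ℝ X]

/-- The risk measure `ρ_{A,S}(x) = inf {m : x + (m/S₀)·S_T ∈ A}`, valued in `EReal`
(with `inf ∅ = ⊤` and unbounded-below giving `⊥`). -/
noncomputable def rho (A : Set X) (S0 : ℝ) (ST : X) (x : X) : EReal :=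
  sInf ((fun r : ℝ => (r : EReal)) '' {r : ℝ | x + (r / S0) • ST ∈ A})

/-- A set is monotone if it contains, with any element, every larger element. -/
def MonotoneSet (A : Set X) : Prop := ∀ x ∈ A, ∀ y, x ≤ y → y ∈ A

/-- An acceptance set: nonempty, proper, and monotone. -/
def AcceptanceSet (A : Set X) : Prop := A.Nonempty ∧ A ≠ Set.univ ∧ MonotoneSet A

/-- The algebraic core (algebraic interior) of a set. -/
def algCore (A : Set X) : Set X :=
  {x | ∀ y : X, ∃ ε > 0, ∀ l : ℝ, |l| < ε → x + l • y ∈ A}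

section Cone

variable {E : Type*} [AddCommGroup E] [Module ℝ E] {A : Set E}

lemma smul_mem_iff_of_cone (hcone : ∀ c : ℝ, 0 ≤ c → ∀ a ∈ A, c • a ∈ A) {c : ℝ} (hc : 0 < c)
    {a : E} : c • a ∈ A ↔ a ∈ A := by
  refine ⟨fun h => ?_, hcone c hc.le a⟩
  simpa [smul_smul, hc.ne'] using hcone c⁻¹ (inv_nonneg.2 hc.le) _ h

lemma add_smul_mem_iff_of_cone (hcone : ∀ c : ℝ, 0 ≤ c → ∀ a ∈ A, c • a ∈ A) {t : ℝ}
    (ht : 0 < t) {v x : E} : v + t • x ∈ A ↔ x + t⁻¹ • v ∈ A := by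
  rw [← smul_mem_iff_of_cone hcone (inv_pos.2 ht), smul_add, smul_smul, inv_mul_cancel₀ ht.ne',
    one_smul, add_comm]

lemma StarConvex.mem_algCore {B : Set E} {v : E} (hB : StarConvex ℝ v B)
    (h : ∀ y : E, ∃ t > (0 : ℝ), v + t • y ∈ B) : v ∈ algCore B := by
  have segment : ∀ y : E, ∃ t > (0 : ℝ), ∀ l : ℝ, 0 ≤ l → l < t → v + l • y ∈ B := fun y => by
    obtain ⟨t, ht, hy⟩ := h y
    refine ⟨t, ht, fun l hl hlt => ?_⟩
    have := hB.add_smul_mem hy (div_nonneg hl ht.le) ((div_le_one ht).2 hlt.le)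
    rwa [smul_smul, div_mul_cancel₀ l ht.ne'] at this
  intro y
  obtain ⟨t₁, ht₁, hpos⟩ := segment y
  obtain ⟨t₂, ht₂, hneg⟩ := segment (-y)
  refine ⟨min t₁ t₂, lt_min ht₁ ht₂, fun l hl => ?_⟩
  rcases le_or_gt 0 l with hl₀ | hl₀
  · exact hpos l hl₀ ((le_abs_self l).trans_lt (hl.trans_le (min_le_left _ _)))
  · simpa using hneg (-l) (by linarith) ((neg_le_abs l).trans_lt (hl.trans_le (min_le_right _ _)))

lemma exists_pos_add_smul_mem_of_mem_algCore {B : Set E} {v : E} (hv : v ∈ algCore B) (y : E) :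
    ∃ t > (0 : ℝ), v + t • y ∈ B := by
  obtain ⟨ε, hε, h⟩ := hv y
  exact ⟨ε / 2, half_pos hε, h _ (by rw [abs_of_pos (half_pos hε)]; linarith)⟩

variable [PartialOrder E] [AddLeftMono E] [PosSMulMono ℝ E]

lemma MonotoneSet.add_smul_mem_of_le (hmono : MonotoneSet A) {s x : E} (hs : 0 ≤ s) {m m' : ℝ}
    (h : x + m • s ∈ A) (hm : m ≤ m') : x + m' • s ∈ A := by
  refine hmono _ h _ ?_
  have : x + m' • s = x + m • s + (m' - m) • s := by rw [sub_smul]; abel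
  exact this ▸ le_add_of_nonneg_right (smul_nonneg (sub_nonneg.2 hm) hs)

lemma MonotoneSet.starConvex_of_cone (hmono : MonotoneSet A)
    (hcone : ∀ c : ℝ, 0 ≤ c → ∀ a ∈ A, c • a ∈ A) {p : E} (hp : 0 ≤ p) : StarConvex ℝ p A :=
  fun z hz _ b ha hb _ =>
    hmono _ (hcone b hb z hz) _ (le_add_of_nonneg_left (smul_nonneg ha hp))

lemma MonotoneSet.starConvex_compl_of_cone (hmono : MonotoneSet A)
    (hcone : ∀ c : ℝ, 0 ≤ c → ∀ a ∈ A, c • a ∈ A) {p : E} (hp : p ≤ 0) (hpA : p ∉ A) :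
    StarConvex ℝ p Aᶜ := by
  intro z hz a b ha hb hab hmem
  rcases hb.eq_or_lt with rfl | hb
  · simp_all
  -- `z` dominates `b⁻¹ • (a • p + b • z) = (b⁻¹ * a) • p + z`, which lies in `A`
  rw [add_smul_mem_iff_of_cone hcone hb, smul_smul] at hmem
  exact hz (hmono _ hmem _ (add_le_of_nonpos_right (smul_nonpos_of_nonneg_of_nonpos
    (mul_nonneg (inv_nonneg.2 hb.le) ha) hp)))

end Cone

section Rho

variable {E : Type*} [AddCommGroup E] [Module ℝ E] {A : Set E} {S0 : ℝ} {ST x : E}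

lemma rho_ne_top_iff (hS0 : S0 ≠ 0) : rho A S0 ST x ≠ ⊤ ↔ ∃ m : ℝ, x + m • ST ∈ A := by
  simp only [rho, ne_eq, sInf_eq_top, Set.forall_mem_image, EReal.coe_ne_top, Set.mem_ofPred_eq,
    imp_false, not_forall, not_not]
  exact ⟨fun ⟨r, h⟩ => ⟨r / S0, h⟩,
    fun ⟨m, h⟩ => ⟨m * S0, by rwa [mul_div_cancel_right₀ _ hS0]⟩⟩

variable [PartialOrder E] [AddLeftMono E] [PosSMulMono ℝ E]

lemma rho_eq_bot_iff (hmono : MonotoneSet A) (hS0 : 0 < S0) (hST : 0 ≤ ST) :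
    rho A S0 ST x = ⊥ ↔ ∀ m : ℝ, x + m • ST ∈ A := by
  refine ⟨fun h m => ?_, fun h => (EReal.eq_bot_iff_forall_lt _).2 fun y => ?_⟩
  · rw [rho, sInf_eq_bot] at h
    obtain ⟨_, ⟨r, hr, rfl⟩, hlt⟩ := h (m * S0 : ℝ) (EReal.bot_lt_coe _)
    exact hmono.add_smul_mem_of_le hST hr ((div_lt_iff₀ hS0).2 (EReal.coe_lt_coe_iff.1 hlt)).le
  · calc rho A S0 ST x ≤ ((y - 1 : ℝ) : EReal) := sInf_le ⟨y - 1, h _, rfl⟩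
      _ < y := mod_cast sub_one_lt y

lemma exists_add_smul_mem_iff (hmono : MonotoneSet A)
    (hcone : ∀ c : ℝ, 0 ≤ c → ∀ a ∈ A, c • a ∈ A) (hST : 0 ≤ ST) :
    (∃ m : ℝ, x + m • ST ∈ A) ↔ ∃ t > (0 : ℝ), ST + t • x ∈ A := by
  refine ⟨fun ⟨m, h⟩ => ?_, fun ⟨t, ht, h⟩ => ⟨t⁻¹, (add_smul_mem_iff_of_cone hcone ht).1 h⟩⟩
  have hpos : 0 < max m 1 := lt_max_of_lt_right one_pos
  refine ⟨(max m 1)⁻¹, inv_pos.2 hpos, ?_⟩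
  rw [add_smul_mem_iff_of_cone hcone (inv_pos.2 hpos), inv_inv]
  exact hmono.add_smul_mem_of_le hST h (le_max_left m 1)

lemma exists_add_smul_notMem_iff (hmono : MonotoneSet A)
    (hcone : ∀ c : ℝ, 0 ≤ c → ∀ a ∈ A, c • a ∈ A) (hST : 0 ≤ ST) :
    (∃ m : ℝ, x + m • ST ∉ A) ↔ ∃ t > (0 : ℝ), -ST + t • x ∈ Aᶜ := by
  refine ⟨fun ⟨m, h⟩ => ?_, fun ⟨t, ht, h⟩ => ⟨-t⁻¹, ?_⟩⟩
  · have hneg : min m (-1) < 0 := min_lt_of_right_lt (by norm_num)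
    refine ⟨(-min m (-1))⁻¹, inv_pos.2 (neg_pos.2 hneg), ?_⟩
    rw [Set.mem_compl_iff, add_smul_mem_iff_of_cone hcone (inv_pos.2 (neg_pos.2 hneg)), inv_inv,
      smul_neg, ← neg_smul, neg_neg]
    exact fun h' => h (hmono.add_smul_mem_of_le hST h' (min_le_left m (-1)))
  · rwa [Set.mem_compl_iff, add_smul_mem_iff_of_cone hcone ht, smul_neg, ← neg_smul] at h

end Rho

theorem rho_conic_finiteness_general (A : Set X) (S0 : ℝ) (ST : X)
    (hA : AcceptanceSet A) (hcone : ∀ c : ℝ, 0 ≤ c → ∀ a ∈ A, c • a ∈ A)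
    (hS0 : 0 < S0) (hST : 0 ≤ ST) :
    ((∀ x : X, rho A S0 ST x ≠ ⊤) ↔ ST ∈ algCore A) ∧
    ((∀ x : X, rho A S0 ST x ≠ ⊥) ↔ -ST ∈ algCore Aᶜ) := by
  obtain ⟨-, -, hmono⟩ := hA
  constructor
  · simp_rw [rho_ne_top_iff hS0.ne', exists_add_smul_mem_iff hmono hcone hST]
    exact ⟨(hmono.starConvex_of_cone hcone hST).mem_algCore,
      exists_pos_add_smul_mem_of_mem_algCore⟩
  · simp_rw [ne_eq, rho_eq_bot_iff hmono hS0 hST, not_forall,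
      exists_add_smul_notMem_iff hmono hcone hST]
    refine ⟨fun h => ?_, exists_pos_add_smul_mem_of_mem_algCore⟩
    have hST_notMem : -ST ∉ A := by simpa using (h 0).choose_spec.2
    exact (hmono.starConvex_compl_of_cone hcone (neg_nonpos.2 hST) hST_notMem).mem_algCore h

/-- for a conic acceptance set, ρ_{A,S} < ∞ everywhere iff S_T is in
the core of A, and ρ_{A,S} > -∞ everywhere iff -S_T is in the core of the
complement of A. -/
theorem rho_conic_finiteness (A : Set X) (S0 : ℝ) (ST : X)
    (hA : AcceptanceSet A) (hcone : ∀ c : ℝ, 0 ≤ c → ∀ a ∈ A, c • a ∈ A)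
    (hS0 : 0 < S0) (hST : 0 ≤ ST) (hSTne : ST ≠ 0) :
    ((∀ x : X, rho A S0 ST x ≠ ⊤) ↔ ST ∈ algCore A) ∧
    ((∀ x : X, rho A S0 ST x ≠ ⊥) ↔ -ST ∈ algCore Aᶜ) :=
  rho_conic_finiteness_general A S0 ST hA hcone hS0 hST
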